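/- Let n, m ≥ 1 and let m be chosen sufficiently large (m = 16n² + 36n + 19 suffices). Then for every description (T_σ, p) of x_n(m) in the standard encoding (i.e. σ ∈ D_{S₀}, p ∈ {0,1}*, T_σ(p) = x_n(m)) with size(T_σ) ≤ n, one has |σ| + |p| > m²/2. -/

import Mathlib

/-! ## Transducers

A deterministic sequential transducer over the binary alphabet `Bool`
(`false` = 0, `true` = 1), with state set `{0, …, n-1}` (representing the
states `1, …, n` of the paper) and start state `0` (the paper's state `1`). -/

structure Transducer where
  n : ℕ
  npos : 0 < n
  delta : Fin n → Bool → Fin n × List Bool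

namespace Transducer

/-- The start state. -/
def start (T : Transducer) : Fin T.n := ⟨0, T.npos⟩

/-- The (state) size of a transducer: its number of states. -/
def size (T : Transducer) : ℕ := T.n

/-- Running `T` from state `q` on an input string: resulting state and output. -/
def run (T : Transducer) (q : Fin T.n) : List Bool → Fin T.n × List Bool
  | [] => (q, [])
  | a :: x =>
    let s := T.delta q a
    let r := T.run s.1 x
    (r.1, s.2 ++ r.2)

/-- The function `{0,1}* → {0,1}*` computed by the transducer `T`. -/
def output (T : Transducer) (p : List Bool) : List Bool :=
  (T.run T.start p).2

end Transducer

/-- The one-state identity transducer. -/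
def idTransducer : Transducer :=
  ⟨1, Nat.one_pos, fun q b => (q, [b])⟩

/-! ## The standard encoding `S₀` -/

/-- `bin i`: the binary representation of `i ≥ 1`, most significant bit first. -/
def binRep (i : ℕ) : List Bool := (Nat.bits i).reverse

/-- `v† = v₁0v₂0⋯v_{m-1}0v_m1`. -/
def dagger : List Bool → List Bool
  | [] => []
  | [a] => [a, true]
  | a :: b :: v => a :: false :: dagger (b :: v)

/-- `v◇`: the bitwise complement of `(1v)†`. -/
def diamond (v : List Bool) : List Bool := (dagger (true :: v)).map (!·)

/-- The encoding `bin(i_t)‡ ⬝ v_t◇` of a single transition from state `j`,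
where `bin(i_t)‡ = ε` for a self-loop and `bin(i_t)† ` otherwise. -/
def encTransition {n : ℕ} (j : Fin n) (t : Fin n × List Bool) : List Bool :=
  (if t.1 = j then [] else dagger (binRep (t.1.val + 1))) ++ diamond t.2

/-- The standard encoding of a transducer: the concatenation, over the states
`j = 1, …, n` in order, of the encodings of the transitions on input `0` and
input `1` from `j`. -/
def stdEnc (T : Transducer) : List Bool :=
  (List.finRange T.n).flatMap fun j =>
    encTransition j (T.delta j false) ++ encTransition j (T.delta j true)

/-- `D_{S₀}`, the set of standard encodings of transducers. -/
def DS0 : Set (List Bool) := Set.range stdEnc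

/-- The set of sizes `|σ| + |p|` of descriptions `(T_σ, p)` of `x` with respect
to the standard encoding. -/
def stdSizes (x : List Bool) : Set ℕ :=
  {c | ∃ (T : Transducer) (p : List Bool),
    T.output p = x ∧ c = (stdEnc T).length + p.length}

/-- `C x`: the finite-state complexity of `x` w.r.t. the standard encoding. -/
noncomputable def Cstd (x : List Bool) : ℕ := sInf (stdSizes x)

/-- `L_{≤ m}` w.r.t. the standard encoding: strings having a minimal
description by a transducer with at most `m` states. -/
def stdLle (m : ℕ) : Set (List Bool) :=
  {x | ∃ (T : Transducer) (p : List Bool),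
    T.output p = x ∧ (stdEnc T).length + p.length = Cstd x ∧ T.size ≤ m}

/-! ## Computable encodings -/

/-- A computable encoding `S = (D_S, f_S)` of all transducers: a decidable
(computable) set `D_S ⊆ {0,1}*` together with a computable bijection
`f_S : D_S → 𝒯_DGSM`, presented via a decoding function
`decode : {0,1}* → Option Transducer` defined exactly on `D_S`; its
computability is expressed via the (injective) standard encoding `stdEnc`. -/
structure CompEncoding where
  D : Set (List Bool)
  dec : ComputablePred (· ∈ D)
  decode : List Bool → Option Transducer
  decode_dom : ∀ σ, (decode σ).isSome ↔ σ ∈ D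
  decode_inj : ∀ σ₁ ∈ D, ∀ σ₂ ∈ D, decode σ₁ = decode σ₂ → σ₁ = σ₂
  decode_surj : ∀ T : Transducer, ∃ σ, decode σ = some T
  decode_comp : Computable fun σ => (decode σ).map stdEnc

namespace CompEncoding

/-- The set of sizes `|σ| + |p|` of descriptions `(T^S_σ, p)` of `x`. -/
def sizes (S : CompEncoding) (x : List Bool) : Set ℕ :=
  {c | ∃ (σ : List Bool) (T : Transducer) (p : List Bool),
    S.decode σ = some T ∧ T.output p = x ∧ c = σ.length + p.length}

/-- `C_S x`: the finite-state complexity of `x` w.r.t. the encoding `S`. -/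
noncomputable def C (S : CompEncoding) (x : List Bool) : ℕ := sInf (S.sizes x)

/-- `L^S_{≤ m}`: strings having a minimal description by a transducer with at
most `m` states (this is empty for `m = 0` since every transducer has at
least one state). -/
def Lle (S : CompEncoding) (m : ℕ) : Set (List Bool) :=
  {x | ∃ (σ : List Bool) (T : Transducer) (p : List Bool),
    S.decode σ = some T ∧ T.output p = x ∧
    σ.length + p.length = S.C x ∧ T.size ≤ m}

/-- `L^S_{= m} = L^S_{≤ m} \ L^S_{≤ m-1}`. -/
def Leq (S : CompEncoding) (m : ℕ) : Set (List Bool) := S.Lle m \ S.Lle (m - 1)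

/-- `L^S_{∃min m}`: strings having a minimal description by a transducer with
exactly `m` states. -/
def LexistsMin (S : CompEncoding) (m : ℕ) : Set (List Bool) :=
  {x | ∃ (σ : List Bool) (T : Transducer) (p : List Bool),
    S.decode σ = some T ∧ T.output p = x ∧
    σ.length + p.length = S.C x ∧ T.size = m}

end CompEncoding

/-! ## The strings `u_i` and `x_n(m)` from the proof of Theorem 1 -/

/-- `u_i = 1 0^i 1^{2n+2-i}` (for `1 ≤ i ≤ 2n+1`, a string of length `2n+3`). -/
def u (n i : ℕ) : List Bool :=
  true :: (List.replicate i false ++ List.replicate (2 * n + 2 - i) true)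

/-- `x_n(m) = u_1^{m²} u_2^{m²} ⋯ u_{2n+1}^{m²}`. -/
def xnm (n m : ℕ) : List Bool :=
  (List.range (2 * n + 1)).flatMap fun i => (List.replicate (m ^ 2) (u n (i + 1))).flatten

/-! ## The transducer `T₁` and input `p₁` from the proof of Theorem 1 -/

/-- The `2n`-state transducer `T₁` with `Δ(j,0) = (j, u_j^m)` for `1 ≤ j ≤ 2n`,
`Δ(j,1) = (j+1, ε)` for `1 ≤ j ≤ 2n-1`, and `Δ(2n,1) = (2n, u_{2n+1}^m)`. -/
def T1 (n m : ℕ) (hn : 0 < n) : Transducer where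
  n := 2 * n
  npos := by omega
  delta := fun j b =>
    match b with
    | false => (j, (List.replicate m (u n (j.val + 1))).flatten)
    | true =>
      if h : j.val + 1 < 2 * n then (⟨j.val + 1, h⟩, [])
      else (j, (List.replicate m (u n (2 * n + 1))).flatten)

/-- `p₁ = (0^m 1)^{2n-1} 0^m 1^m`. -/
def p1 (n m : ℕ) : List Bool :=
  (List.replicate (2 * n - 1) (List.replicate m false ++ [true])).flatten
    ++ List.replicate m false ++ List.replicate m true

/-! ## The transducers `T_n` from Section 5 -/

/-- `p_i`: the `i`-th prime (`p₁ = 2`, `p₂ = 3`, …). -/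
noncomputable def nthPrime (i : ℕ) : ℕ := Nat.nth Nat.Prime (i - 1)

/-- The `n`-state transducer `T_n` with `Δ_n(1,0) = (1, 0^{p_n})`,
`Δ_n(i,0) = (i, ε)` for `2 ≤ i ≤ n`, `Δ_n(j,1) = (j+1, ε)` for
`1 ≤ j ≤ n-1`, and `Δ_n(n,1) = (n, ε)`. -/
noncomputable def Tsec5 (n : ℕ) (hn : 0 < n) : Transducer where
  n := n
  npos := hn
  delta := fun j b =>
    match b with
    | false =>
      if j.val = 0 then (j, List.replicate (nthPrime n) false) else (j, [])
    | true =>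
      if h : j.val + 1 < n then (⟨j.val + 1, h⟩, []) else (j, [])

/-- The defining properties of the encoding `S₁` of Theorem 4: each `T_n` is
encoded by `bin(n)`, and every transducer that is not one of the `T_n` is
encoded by `0` concatenated with its standard encoding. -/
def IsS1 (S : CompEncoding) : Prop :=
  (∀ (n : ℕ) (hn : 0 < n), S.decode (binRep n) = some (Tsec5 n hn)) ∧
  (∀ T : Transducer, (∀ (n : ℕ) (hn : 0 < n), T ≠ Tsec5 n hn) →
    S.decode (false :: stdEnc T) = some T)

/-- The defining properties of the encoding `S₁'` of Corollary 2: each `T_n` is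
encoded by `bin(n)† ⬝ 1^n`, and every transducer `T` that is not one of the
`T_n`, with standard encoding `σ`, is encoded by `0 ⬝ σ† ⬝ 1^{2^{|σ|}}`. -/
def IsS1' (S : CompEncoding) : Prop :=
  (∀ (n : ℕ) (hn : 0 < n),
    S.decode (dagger (binRep n) ++ List.replicate n true) = some (Tsec5 n hn)) ∧
  (∀ T : Transducer, (∀ (n : ℕ) (hn : 0 < n), T ≠ Tsec5 n hn) →
    S.decode (false :: (dagger (stdEnc T) ++
      List.replicate (2 ^ (stdEnc T).length) true)) = some T)

/-! Cut the output `x_n(m)` along `p` into the chunks emitted by single transitions. Assign to each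
transition output the least `j ≥ 1` such that `1 0^j 1` occurs in it; with at most `2n` transitions,
some `i ∈ [1, 2n+1]` is assigned to none. In the block `u_i^{m²}` every factor `1 0^j 1` with `j ≥ 1`
has `j = i`, and every factor of length `≥ 2|u_i| - 1` contains `u_i`; so a chunk lying inside the
block has length at most `4n + 4`. Every chunk is shorter than `σ`, so the block is covered by two
straddling chunks and at most `|p|` inner ones: `m² (2n + 3) ≤ 2|σ| + |p| (4n + 4)`, which forces
`m² < 2 (|σ| + |p|)`. -/

namespace Transducer

def chunks (T : Transducer) : Fin T.n → List Bool → List (List Bool)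
  | _, [] => []
  | q, a :: x => (T.delta q a).2 :: T.chunks (T.delta q a).1 x

theorem run_snd_eq_flatten_chunks (T : Transducer) (q : Fin T.n) (p : List Bool) :
    (T.run q p).2 = (T.chunks q p).flatten := by
  induction p generalizing q with
  | nil => rfl
  | cons a x ih => simp [run, chunks, ih]

theorem length_chunks (T : Transducer) (q : Fin T.n) (p : List Bool) :
    (T.chunks q p).length = p.length := by
  induction p generalizing q with
  | nil => rfl
  | cons a x ih => simp [chunks, ih]

theorem exists_eq_delta_of_mem_chunks {T : Transducer} {q : Fin T.n} {p v : List Bool}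
    (hv : v ∈ T.chunks q p) : ∃ q' b, v = (T.delta q' b).2 := by
  induction p generalizing q with
  | nil => simp [chunks] at hv
  | cons a x ih =>
    rcases List.mem_cons.mp hv with rfl | hv
    · exact ⟨q, a, rfl⟩
    · exact ih hv

end Transducer

theorem length_dagger (v : List Bool) : (dagger v).length = 2 * v.length := by
  induction v using dagger.induct with
  | case1 | case2 => rfl
  | case3 a b v ih => simp only [dagger, List.length_cons, ih]; ring

theorem length_diamond (v : List Bool) : (diamond v).length = 2 * v.length + 2 := by
  rw [diamond, List.length_map, length_dagger, List.length_cons]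
  ring

theorem length_delta_snd_lt_length_stdEnc (T : Transducer) (q : Fin T.n) (b : Bool) :
    (T.delta q b).2.length < (stdEnc T).length := by
  have hdiamond : diamond (T.delta q b).2 <:+: encTransition q (T.delta q b) :=
    (List.suffix_append _ _).isInfix
  have htransition : encTransition q (T.delta q b) <:+:
      encTransition q (T.delta q false) ++ encTransition q (T.delta q true) := by
    cases b
    · exact (List.prefix_append _ _).isInfix
    · exact (List.suffix_append _ _).isInfix
  have hstate : encTransition q (T.delta q false) ++ encTransition q (T.delta q true) <:+:
      stdEnc T := by
    rw [stdEnc, List.flatMap_def]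
    exact List.infix_of_mem_flatten (List.mem_map_of_mem (List.mem_finRange q))
  have := (hdiamond.trans (htransition.trans hstate)).length_le
  rw [length_diamond] at this
  omega

namespace Transducer

theorem length_le_length_stdEnc_of_mem_chunks {T : Transducer} {q : Fin T.n} {p v : List Bool}
    (hv : v ∈ T.chunks q p) : v.length ≤ (stdEnc T).length := by
  obtain ⟨q', b, rfl⟩ := exists_eq_delta_of_mem_chunks hv
  exact (length_delta_snd_lt_length_stdEnc T q' b).le

end Transducer

namespace List

theorem length_flatten_replicate {α : Type*} (w : List α) (N : ℕ) :
    (replicate N w).flatten.length = N * w.length := by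
  simp [length_flatten, map_replicate, sum_replicate]

theorem getElem?_flatten_replicate {α : Type*} (w : List α) {N k : ℕ} (hk : k < N * w.length) :
    (replicate N w).flatten[k]? = w[k % w.length]? := by
  induction N generalizing k with
  | zero => simp at hk
  | succ N ih =>
    rw [replicate_succ, flatten_cons]
    by_cases hkw : k < w.length
    · rw [getElem?_append_left hkw, Nat.mod_eq_of_lt hkw]
    · push Not at hkw
      rw [getElem?_append_right hkw, ih (by rw [Nat.succ_mul] at hk; omega),
        Nat.mod_eq_sub_mod hkw]

theorem IsInfix.infix_of_flatten_replicate {α : Type*} {v w : List α} {N : ℕ}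
    (hv : v <:+: (replicate N w).flatten) (hlen : 2 * w.length ≤ v.length + 1) : w <:+: v := by
  obtain ⟨s, t, hst⟩ := hv
  rcases Nat.eq_zero_or_pos w.length with hL | hL
  · exact (length_eq_zero_iff.mp hL) ▸ nil_infix
  obtain ⟨q, r, hs, hr⟩ : ∃ q r, s.length = w.length * q + r ∧ r < w.length :=
    ⟨_, _, (Nat.div_add_mod _ _).symm, Nat.mod_lt _ hL⟩
  have hWlen : s.length + v.length + t.length = N * w.length := by
    have := congrArg length hst
    simp only [length_append, length_flatten_replicate] at this
    omega
  -- from the offset `o` on, `v` is aligned with the period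
  obtain ⟨o, q', ho, hso⟩ : ∃ o q', o < w.length ∧ s.length + o = w.length * q' := by
    rcases Nat.eq_zero_or_pos r with hr0 | hr0
    · exact ⟨0, q, hL, by omega⟩
    · exact ⟨w.length - r, q + 1, by omega, by rw [hs, Nat.mul_succ]; omega⟩
  have hw : (v.drop o).take w.length = w := by
    refine ext_getElem? fun k => ?_
    by_cases hk : k < w.length
    · rw [getElem?_take_of_lt hk, getElem?_drop]
      have hvW : v[o + k]? = (replicate N w).flatten[s.length + (o + k)]? := by
        rw [← hst, append_assoc, getElem?_append_right (by omega),
          Nat.add_sub_cancel_left, getElem?_append_left (by omega)]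
      rw [hvW, getElem?_flatten_replicate w (by omega), ← Nat.add_assoc, hso,
        Nat.mul_add_mod, Nat.mod_eq_of_lt hk]
    · push Not at hk
      rw [getElem?_eq_none (by rw [length_take, length_drop]; omega), getElem?_eq_none hk]
  rw [← hw]
  exact (take_prefix _ _).isInfix.trans (drop_suffix _ _).isInfix

variable {α : Type*} {C S : ℕ}

theorem length_le_of_flatten_eq_append {cs : List (List α)} {M B : List α}
    (h : cs.flatten = M ++ B) (hC : ∀ v ∈ cs, v.length ≤ C)
    (hS : ∀ v ∈ cs, v <:+: M → v.length ≤ S) : M.length ≤ C + cs.length * S := by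
  induction cs generalizing M with
  | nil =>
    obtain rfl : M = [] := (append_eq_nil_iff.mp h.symm).1
    simp
  | cons v cs ih =>
    rw [flatten_cons] at h
    rcases append_eq_append_iff.mp h with ⟨M', rfl, hM'⟩ | ⟨v', rfl, -⟩
    · have hv := hS v mem_cons_self (prefix_append v M').isInfix
      have hM' := ih hM' (fun w hw => hC w (mem_cons_of_mem v hw))
        (fun w hw hwM => hS w (mem_cons_of_mem v hw) (hwM.trans (suffix_append v M').isInfix))
      rw [length_append, length_cons, Nat.add_one_mul]
      omega
    · have := hC _ mem_cons_self
      rw [length_append] at this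
      omega

theorem IsInfix.length_le_of_flatten {cs : List (List α)} {M : List α}
    (h : M <:+: cs.flatten) (hC : ∀ v ∈ cs, v.length ≤ C)
    (hS : ∀ v ∈ cs, v <:+: M → v.length ≤ S) : M.length ≤ 2 * C + cs.length * S := by
  obtain ⟨A, B, h⟩ := h
  induction cs generalizing A with
  | nil =>
    have := congrArg length h
    simp only [length_append, flatten_nil, length_nil] at this
    omega
  | cons v cs ih =>
    rw [flatten_cons, append_assoc] at h
    have hCcs : ∀ w ∈ cs, w.length ≤ C := fun w hw => hC w (mem_cons_of_mem v hw)
    have hScs : ∀ w ∈ cs, w <:+: M → w.length ≤ S := fun w hw => hS w (mem_cons_of_mem v hw)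
    have hv := hC v mem_cons_self
    rcases append_eq_append_iff.mp h.symm with ⟨A', rfl, hA'⟩ | ⟨v', rfl, hv'⟩
    · have := ih hCcs hScs A' (by rw [hA', append_assoc])
      rw [length_cons, Nat.add_one_mul cs.length]
      omega
    · rw [length_append] at hv
      rcases append_eq_append_iff.mp hv'.symm with ⟨M', rfl, hM'⟩ | ⟨v'', rfl, -⟩
      · have := length_le_of_flatten_eq_append hM' hCcs
          (fun w hw hwM => hScs w hw (hwM.trans (suffix_append v' M').isInfix))
        rw [length_append, length_cons, Nat.add_one_mul cs.length]
        omega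
      · rw [length_append] at hv
        omega

end List

def gapWord (j t : ℕ) : List Bool :=
  true :: (List.replicate j false ++ List.replicate t true)

theorem u_eq_gapWord (n i : ℕ) : u n i = gapWord i (2 * n + 2 - i) := rfl

theorem length_gapWord (j t : ℕ) : (gapWord j t).length = j + t + 1 := by
  simp [gapWord]

theorem length_u {n i : ℕ} (hi : i ≤ 2 * n + 2) : (u n i).length = 2 * n + 3 := by
  rw [u_eq_gapWord, length_gapWord]
  omega

theorem getElem?_gapWord {j t k : ℕ} (hk : k < j + t + 1) :
    (gapWord j t)[k]? = some (decide (k = 0 ∨ j < k)) := by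
  rcases k with _ | k
  · simp [gapWord]
  · simp only [gapWord, List.getElem?_cons_succ, List.getElem?_append, List.getElem?_replicate,
      List.length_replicate]
    split_ifs
    · simp only [Option.some.injEq, false_eq_decide_iff, false_or]
      omega
    · simp only [Option.some.injEq, true_eq_decide_iff, false_or]
      omega
    · omega

theorem gapWord_prefix_gapWord {j t : ℕ} (ht : 1 ≤ t) : gapWord j 1 <+: gapWord j t := by
  obtain ⟨t, rfl⟩ := Nat.exists_eq_add_of_le ht
  exact ⟨List.replicate t true, by simp [gapWord, List.replicate_add]⟩

theorem eq_of_gapWord_infix_flatten_replicate {i t j N : ℕ} (ht : 1 ≤ t) (hj : 1 ≤ j)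
    (h : gapWord j 1 <:+: (List.replicate N (gapWord i t)).flatten) : j = i := by
  obtain ⟨s, s', hst⟩ := h
  have hlen : s.length + (j + 2) + s'.length = N * (i + t + 1) := by
    have := congrArg List.length hst
    simp only [List.length_append, List.length_flatten_replicate, length_gapWord] at this
    omega
  have bit : ∀ k < j + 2, ((s.length + k) % (i + t + 1) = 0 ∨ i < (s.length + k) % (i + t + 1))
      ↔ (k = 0 ∨ j < k) := by
    intro k hk
    have hk' : (List.replicate N (gapWord i t)).flatten[s.length + k]? = (gapWord j 1)[k]? := by
      rw [← hst, List.append_assoc, List.getElem?_append_right (by omega),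
        Nat.add_sub_cancel_left, List.getElem?_append_left (by rw [length_gapWord]; omega)]
    rw [List.getElem?_flatten_replicate _ (by rw [length_gapWord]; omega), length_gapWord,
      getElem?_gapWord (Nat.mod_lt _ (by omega)), getElem?_gapWord (by omega)] at hk'
    simpa only [Option.some.injEq, decide_eq_decide] using hk'
  obtain ⟨q, r, hs, hr⟩ : ∃ q r, s.length = (i + t + 1) * q + r ∧ r < i + t + 1 :=
    ⟨_, _, (Nat.div_add_mod _ _).symm, Nat.mod_lt _ (by omega)⟩
  have hmod : ∀ k, r + k < i + t + 1 → (s.length + k) % (i + t + 1) = r + k := by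
    intro k hk
    rw [hs, Nat.add_assoc, Nat.mul_add_mod, Nat.mod_eq_of_lt hk]
  -- the leading `1 0` of the factor can only sit at the start of a period
  have hr0 : r = 0 := by
    have h0 := bit 0 (by omega)
    have h1 := bit 1 (by omega)
    rw [hmod 0 (by omega)] at h0
    by_cases hr1 : r + 1 < i + t + 1
    · rw [hmod 1 hr1] at h1
      omega
    · have : (s.length + 1) % (i + t + 1) = 0 := by
        rw [hs, Nat.add_assoc, show r + 1 = i + t + 1 by omega, ← Nat.mul_succ, Nat.mul_mod_right]
      omega
  subst hr0
  have hji : j ≤ i := by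
    by_contra! hij
    have := bit (i + 1) (by omega)
    rw [hmod (i + 1) (by omega)] at this
    omega
  have := bit (j + 1) (by omega)
  rw [hmod (j + 1) (by omega)] at this
  omega

open Classical in
noncomputable def leastGap (v : List Bool) : ℕ :=
  if h : ∃ j, 1 ≤ j ∧ gapWord j 1 <:+: v then Nat.find h else 0

theorem leastGap_spec {v : List Bool} (h : ∃ j, 1 ≤ j ∧ gapWord j 1 <:+: v) :
    1 ≤ leastGap v ∧ gapWord (leastGap v) 1 <:+: v := by
  rw [leastGap, dif_pos h]
  exact Nat.find_spec h

theorem leastGap_eq_of_infix_flatten_replicate_u {n i N : ℕ} (hi : 1 ≤ i) (hin : i ≤ 2 * n + 1)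
    {v : List Bool} (hv : v <:+: (List.replicate N (u n i)).flatten)
    (hlen : 4 * n + 5 ≤ v.length) : leastGap v = i := by
  have hu : u n i <:+: v := hv.infix_of_flatten_replicate (by rw [length_u (by omega)]; omega)
  rw [u_eq_gapWord] at hv hu
  obtain ⟨hpos, hleast⟩ :=
    leastGap_spec ⟨i, hi, (gapWord_prefix_gapWord (by omega)).isInfix.trans hu⟩
  exact eq_of_gapWord_infix_flatten_replicate (by omega) hpos (hleast.trans hv)

theorem Transducer.exists_forall_leastGap_ne (T : Transducer) {n : ℕ} (hT : T.size ≤ n) :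
    ∃ i, 1 ≤ i ∧ i ≤ 2 * n + 1 ∧ ∀ q b, leastGap (T.delta q b).2 ≠ i := by
  have hcard : (Finset.univ.image fun qb : Fin T.n × Bool => leastGap (T.delta qb.1 qb.2).2).card
      < (Finset.Icc 1 (2 * n + 1)).card := by
    refine Finset.card_image_le.trans_lt ?_
    simp only [Finset.card_univ, Fintype.card_prod, Fintype.card_fin, Fintype.card_bool,
      Nat.card_Icc]
    exact (Nat.mul_le_mul_right 2 hT).trans_lt (by omega)
  obtain ⟨i, hi, hnot⟩ := Finset.exists_mem_notMem_of_card_lt_card hcard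
  rw [Finset.mem_Icc] at hi
  exact ⟨i, hi.1, hi.2, fun q b hqb => hnot (Finset.mem_image.mpr ⟨(q, b), Finset.mem_univ _, hqb⟩)⟩

theorem flatten_replicate_u_infix_xnm {n i : ℕ} (m : ℕ) (hi : 1 ≤ i) (hin : i ≤ 2 * n + 1) :
    (List.replicate (m ^ 2) (u n i)).flatten <:+: xnm n m := by
  obtain ⟨k, rfl⟩ := Nat.exists_eq_add_of_le' hi
  exact List.infix_of_mem_flatten (List.mem_map_of_mem (List.mem_range.mpr (by omega)))

theorem stmt4_general (n : ℕ) (m : ℕ)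
    (T : Transducer) (p : List Bool)
    (hdesc : T.output p = xnm n m) (hsize : T.size ≤ n) :
    m ^ 2 < 2 * ((stdEnc T).length + p.length) := by
  obtain ⟨i, hi, hin, hfree⟩ := T.exists_forall_leastGap_ne hsize
  have hblock : (List.replicate (m ^ 2) (u n i)).flatten <:+: (T.chunks T.start p).flatten := by
    rw [← T.run_snd_eq_flatten_chunks, ← Transducer.output, hdesc]
    exact flatten_replicate_u_infix_xnm m hi hin
  have hinner : ∀ v ∈ T.chunks T.start p, v <:+: (List.replicate (m ^ 2) (u n i)).flatten →
      v.length ≤ 4 * n + 4 := by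
    intro v hv hvW
    obtain ⟨q, b, rfl⟩ := Transducer.exists_eq_delta_of_mem_chunks hv
    by_contra! hlong
    exact hfree q b (leastGap_eq_of_infix_flatten_replicate_u hi hin hvW hlong)
  have hcount :=
    hblock.length_le_of_flatten (fun _ => Transducer.length_le_length_stdEnc_of_mem_chunks) hinner
  rw [List.length_flatten_replicate, length_u (by omega), T.length_chunks] at hcount
  have hσ := length_delta_snd_lt_length_stdEnc T T.start false
  by_contra! hsmall
  nlinarith [Nat.mul_le_mul_right (2 * n + 3) hsmall]

theorem stmt4 (n : ℕ) (hn : 1 ≤ n) (m : ℕ) (hm : m = 16 * n ^ 2 + 36 * n + 19)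
    (T : Transducer) (p : List Bool)
    (hdesc : T.output p = xnm n m) (hsize : T.size ≤ n) :
    m ^ 2 < 2 * ((stdEnc T).length + p.length) :=
  stmt4_general n m T p hdesc hsize
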